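/- arXiv:1501.00169 — 2 statements merged into one kernel-verified Lean document; each statement's English description precedes it below -/
import Mathlib

section
/- The map h : ℂ² → ℂ × ℝ, h(z,w) = (2·z·conj(w), |z|² − |w|²), restricted to the unit sphere S³ ⊂ ℂ² gives a continuous surjection onto the unit sphere S² ⊂ ℂ × ℝ, and the preimage of each point of S² is a single orbit of the Hopf circle action on S³. -/
/-!
`hopfModel (z, w)` records `|z|² - |w|²` and `z w̄`, and these determine `|z|` and `|w|`. Hence two points with the same image differ by
the common phase `⟪p, p'⟫ / ‖p‖²`, while conversely `hopfModel (c z, c w) = |c|² hopfModel (z, w)`.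
A preimage of `(a, t) ∈ S²` is `(0, 1)` at the south pole `t = -1` and otherwise
`(r, ā / 2r)` with `r = √((1 + t) / 2)`.
-/

/-- The quadratic model of the Hopf quotient map. -/
noncomputable def hopfModel (p : ℂ × ℂ) : ℂ × ℝ :=
  (2 * p.1 * (starRingEnd ℂ) p.2, ‖p.1‖ ^ 2 - ‖p.2‖ ^ 2)

open ComplexConjugate

theorem continuous_hopfModel : Continuous hopfModel := by
  unfold hopfModel; fun_prop

theorem hopfModel_mul (c : ℂ) (p : ℂ × ℂ) :
    hopfModel (c * p.1, c * p.2) = (‖c‖ ^ 2 : ℝ) • hopfModel p := by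
  have hc : c * conj c = (‖c‖ ^ 2 : ℝ) := by push_cast; exact Complex.mul_conj' c
  ext
  · simp only [hopfModel, map_mul, Prod.smul_fst, Complex.real_smul]
    linear_combination 2 * p.1 * conj p.2 * hc
  · simp only [hopfModel, norm_mul, Prod.smul_snd, smul_eq_mul]
    ring

theorem hopfModel_ofReal_left {r : ℝ} (hr : r ≠ 0) (a : ℂ) :
    hopfModel (r, conj a / (2 * r)) = (a, r ^ 2 - ‖a‖ ^ 2 / (4 * r ^ 2)) := by
  have hr' : (r : ℂ) ≠ 0 := by exact_mod_cast hr
  simp only [hopfModel, map_div₀, map_mul, Complex.conj_conj, Complex.conj_ofReal, map_ofNat,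
    norm_div, norm_mul, Complex.norm_conj, Complex.norm_real, Real.norm_eq_abs, Complex.norm_two,
    div_pow, mul_pow, sq_abs, Prod.mk.injEq]
  constructor
  · field_simp
  · ring

theorem exists_sphere_hopfModel_eq {a : ℂ} {t : ℝ} (h : ‖a‖ ^ 2 + t ^ 2 = 1) :
    ∃ p : ℂ × ℂ, ‖p.1‖ ^ 2 + ‖p.2‖ ^ 2 = 1 ∧ hopfModel p = (a, t) := by
  rcases eq_or_ne t (-1) with rfl | ht
  · have ha : a = 0 := by simpa using (show ‖a‖ ^ 2 = 0 by linarith)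
    exact ⟨(0, 1), by simp, by simp [hopfModel, ha]⟩
  have ht' : 0 < 1 + t := by
    have : -1 ≤ t := by nlinarith [norm_nonneg a]
    linarith [lt_of_le_of_ne this ht.symm]
  set r := √((1 + t) / 2)
  have hr2 : r ^ 2 = (1 + t) / 2 := Real.sq_sqrt (by positivity)
  have hr : r ≠ 0 := (Real.sqrt_pos.2 (by positivity)).ne'
  have ha : ‖a‖ ^ 2 / (4 * r ^ 2) = (1 - t) / 2 := by
    rw [hr2, show ‖a‖ ^ 2 = (1 - t) * (1 + t) by linarith]; field_simp; ring
  have hw : ‖conj a / (2 * (r : ℂ))‖ ^ 2 = ‖a‖ ^ 2 / (4 * r ^ 2) := by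
    simp only [norm_div, norm_mul, Complex.norm_conj, Complex.norm_real, Real.norm_eq_abs,
      Complex.norm_two, div_pow, mul_pow, sq_abs]
    norm_num
  refine ⟨(r, conj a / (2 * r)), ?_, ?_⟩
  · rw [Complex.norm_real, Real.norm_eq_abs, sq_abs, hw, ha, hr2]; ring
  · rw [hopfModel_ofReal_left hr, ha, hr2]; congr 1; ring

theorem norm_eq_of_hopfModel_eq {p p' : ℂ × ℂ} (h : hopfModel p = hopfModel p') :
    ‖p.1‖ = ‖p'.1‖ ∧ ‖p.2‖ = ‖p'.2‖ := by
  simp only [hopfModel, Prod.mk.injEq] at h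
  have hprod : ‖p.1‖ * ‖p.2‖ = ‖p'.1‖ * ‖p'.2‖ := by
    have := congrArg norm h.1
    simp only [norm_mul, Complex.norm_conj, Complex.norm_two] at this
    linarith
  -- `(x + y)² = (x - y)² + 4xy` recovers the sum of the squared norms
  have hsum : ‖p.1‖ ^ 2 + ‖p.2‖ ^ 2 = ‖p'.1‖ ^ 2 + ‖p'.2‖ ^ 2 := by
    refine (pow_left_inj₀ (by positivity) (by positivity) two_ne_zero).1 ?_
    linear_combination (‖p.1‖ ^ 2 - ‖p.2‖ ^ 2 + ‖p'.1‖ ^ 2 - ‖p'.2‖ ^ 2) * h.2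
      + 4 * (‖p.1‖ * ‖p.2‖ + ‖p'.1‖ * ‖p'.2‖) * hprod
  constructor
  · exact (pow_left_inj₀ (norm_nonneg _) (norm_nonneg _) two_ne_zero).1 (by linarith)
  · exact (pow_left_inj₀ (norm_nonneg _) (norm_nonneg _) two_ne_zero).1 (by linarith)

theorem exists_norm_eq_one_mul_eq_of_hopfModel_eq {p p' : ℂ × ℂ}
    (h : hopfModel p = hopfModel p') : ∃ c : ℂ, ‖c‖ = 1 ∧ p' = (c * p.1, c * p.2) := by
  obtain ⟨z, w⟩ := p
  obtain ⟨z', w'⟩ := p'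
  obtain ⟨hz, hw⟩ := norm_eq_of_hopfModel_eq h
  dsimp only at hz hw
  by_cases h0 : z = 0 ∧ w = 0
  · obtain ⟨rfl, rfl⟩ := h0
    refine ⟨1, norm_one, ?_⟩
    rw [norm_zero, eq_comm, norm_eq_zero] at hz hw
    simp [hz, hw]
  set N : ℝ := ‖z‖ ^ 2 + ‖w‖ ^ 2
  have hN : N ≠ 0 := by
    intro hN
    have hz0 : ‖z‖ ^ 2 = 0 := by linarith [sq_nonneg ‖z‖, sq_nonneg ‖w‖]
    have hw0 : ‖w‖ ^ 2 = 0 := by linarith [sq_nonneg ‖z‖, sq_nonneg ‖w‖]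
    exact h0 ⟨by simpa using hz0, by simpa using hw0⟩
  have h1 : z * conj w = z' * conj w' := by
    linear_combination (Prod.mk.inj h).1 / 2
  have h1' : conj z * w = conj z' * w' := by simpa using congrArg conj h1
  have hzz : z' * conj z' = z * conj z := by simp only [Complex.mul_conj', hz]
  have hww : w' * conj w' = w * conj w := by simp only [Complex.mul_conj', hw]
  have hNz : (N : ℂ) = z * conj z + w * conj w := by simp [N, Complex.mul_conj']
  set c : ℂ := (z' * conj z + w' * conj w) / N
  have hcz : c * z = z' := by
    rw [div_mul_eq_mul_div, div_eq_iff (by exact_mod_cast hN), hNz]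
    linear_combination w' * h1 + z' * hww
  have hcw : c * w = w' := by
    rw [div_mul_eq_mul_div, div_eq_iff (by exact_mod_cast hN), hNz]
    linear_combination z' * h1' + w' * hzz
  have hc : ‖c‖ ^ 2 * N = 1 * N :=
    calc ‖c‖ ^ 2 * N = ‖c * z‖ ^ 2 + ‖c * w‖ ^ 2 := by simp only [N, norm_mul]; ring
      _ = 1 * N := by rw [hcz, hcw, ← hz, ← hw, one_mul]
  refine ⟨c, ?_, by rw [hcz, hcw]⟩
  exact (pow_eq_one_iff_of_nonneg (norm_nonneg c) two_ne_zero).1 (mul_right_cancel₀ hN hc)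

theorem hopfModel_eq_iff {p p' : ℂ × ℂ} :
    hopfModel p = hopfModel p' ↔ ∃ c : ℂ, ‖c‖ = 1 ∧ p' = (c * p.1, c * p.2) := by
  refine ⟨exists_norm_eq_one_mul_eq_of_hopfModel_eq, ?_⟩
  rintro ⟨c, hc, rfl⟩
  rw [hopfModel_mul, hc, one_pow, one_smul]

/-- The restriction of `hopfModel` to the unit sphere `S³ ⊂ ℂ²` is a continuous
surjection onto the unit sphere `S² ⊂ ℂ × ℝ`, and the preimage of each point is
a single orbit of the Hopf circle action. -/
theorem hopfModel_sphere_restriction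
    (H : {p : ℂ × ℂ // ‖p.1‖ ^ 2 + ‖p.2‖ ^ 2 = 1} →
         {q : ℂ × ℝ // ‖q.1‖ ^ 2 + q.2 ^ 2 = 1})
    (hH : ∀ p, (H p : ℂ × ℝ) = hopfModel p) :
    Continuous H ∧ Function.Surjective H ∧
      ∀ p p', H p = H p' ↔
        ∃ lam : ℂ, ‖lam‖ = 1 ∧
          (p' : ℂ × ℂ) = (lam * (p : ℂ × ℂ).1, lam * (p : ℂ × ℂ).2) := by
  have hH' : Subtype.val ∘ H = hopfModel ∘ Subtype.val := funext hH
  refine ⟨?_, ?_, fun p p' => ?_⟩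
  · rw [continuous_induced_rng, hH']
    exact continuous_hopfModel.comp continuous_subtype_val
  · rintro ⟨⟨a, t⟩, hq⟩
    obtain ⟨p, hp, hpq⟩ := exists_sphere_hopfModel_eq hq
    exact ⟨⟨p, hp⟩, Subtype.ext ((hH _).trans hpq)⟩
  · rw [← hopfModel_eq_iff, Subtype.ext_iff, hH, hH]
end

section
/- For any r > 0, the restriction of h(z,w) = (2·z·conj(w), |z|² − |w|²) to the sphere of radius r in ℂ² is an open map onto the sphere of radius r² in ℂ × ℝ. -/
open ComplexConjugate

theorem Topology.IsQuotientMap.isOpenMap_of_transitive_on_fibers {X Y ι : Type*}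
    [TopologicalSpace X] [TopologicalSpace Y] {f : X → Y} (hf : IsQuotientMap f)
    (g : ι → X → X) (hg : ∀ i, Continuous (g i)) (hfg : ∀ i x, f (g i x) = f x)
    (htrans : ∀ x y, f x = f y → ∃ i, g i x = y) : IsOpenMap f := by
  intro U hU
  have hsat : f ⁻¹' (f '' U) = ⋃ i, g i ⁻¹' U := by
    ext x
    constructor
    · rintro ⟨y, hyU, hyx⟩
      obtain ⟨i, rfl⟩ := htrans x y hyx.symm
      exact Set.mem_iUnion.2 ⟨i, hyU⟩
    · rintro ⟨-, ⟨i, rfl⟩, hx⟩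
      exact ⟨g i x, hx, hfg i x⟩
  rw [← hf.isOpen_preimage, hsat]
  exact isOpen_iUnion fun i ↦ hU.preimage (hg i)

theorem isCompact_setOf_sqrt_norm_sq_add_norm_sq_eq {E F : Type*} [NormedAddCommGroup E]
    [NormedAddCommGroup F] [ProperSpace E] [ProperSpace F] (r : ℝ) :
    IsCompact {p : E × F | √(‖p.1‖ ^ 2 + ‖p.2‖ ^ 2) = r} := by
  refine Metric.isCompact_of_isClosed_isBounded (isClosed_eq (by fun_prop) continuous_const) ?_
  refine (Metric.isBounded_closedBall (x := 0) (r := r)).subset fun p (hp : _ = r) ↦ ?_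
  rw [mem_closedBall_zero_iff, Prod.norm_def, max_le_iff, ← hp]
  constructor <;> apply Real.le_sqrt_of_sq_le <;> linarith [sq_nonneg ‖p.1‖, sq_nonneg ‖p.2‖]

theorem Circle.exists_mul_eq_and_mul_eq {z w z' w' : ℂ} (hz : z ≠ 0) (hnorm : ‖z‖ = ‖z'‖)
    (h : z * conj w = z' * conj w') : ∃ l : Circle, l * z = z' ∧ l * w = w' := by
  set l : ℂ := z' / z
  have hl : ‖l‖ = 1 := by rw [norm_div, ← hnorm, div_self (norm_ne_zero_iff.2 hz)]
  have hlz : l * z = z' := div_mul_cancel₀ z' hz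
  have hw' : conj w = l * conj w' := mul_left_cancel₀ hz (by rw [h, ← hlz]; ring)
  have hw : w = conj l * w' := by simpa using congrArg conj hw'
  refine ⟨⟨l, mem_sphere_zero_iff_norm.2 hl⟩, hlz, ?_⟩
  change l * w = w'
  rw [hw, ← mul_assoc, Complex.mul_conj, Complex.normSq_eq_norm_sq, hl]
  simp

theorem norm_sq_add_sq_hopfModel (p : ℂ × ℂ) :
    ‖(hopfModel p).1‖ ^ 2 + (hopfModel p).2 ^ 2 = (‖p.1‖ ^ 2 + ‖p.2‖ ^ 2) ^ 2 := by
  simp only [hopfModel, norm_mul, Complex.norm_conj, Complex.norm_ofNat]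
  ring

theorem sqrt_norm_sq_add_sq_hopfModel_eq_sq_iff {r : ℝ} (hr : 0 ≤ r) (p : ℂ × ℂ) :
    √(‖(hopfModel p).1‖ ^ 2 + (hopfModel p).2 ^ 2) = r ^ 2 ↔ √(‖p.1‖ ^ 2 + ‖p.2‖ ^ 2) = r := by
  rw [norm_sq_add_sq_hopfModel, Real.sqrt_sq (by positivity),
    Real.sqrt_eq_iff_eq_sq (by positivity) hr]

theorem hopfModel_circle_smul (l : Circle) (p : ℂ × ℂ) : hopfModel (l • p) = hopfModel p := by
  have hl : (l : ℂ) * conj (l : ℂ) = 1 := by simp [Complex.mul_conj]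
  simp only [hopfModel, Prod.smul_fst, Prod.smul_snd, Circle.smul_def, smul_eq_mul, map_mul,
    norm_mul, Circle.norm_coe, one_mul]
  ext
  · linear_combination 2 * p.1 * conj p.2 * hl
  · rfl

theorem exists_circle_smul_eq_of_hopfModel_eq {p q : ℂ × ℂ} (h : hopfModel p = hopfModel q) :
    ∃ l : Circle, l • p = q := by
  have hsum : ‖p.1‖ ^ 2 + ‖p.2‖ ^ 2 = ‖q.1‖ ^ 2 + ‖q.2‖ ^ 2 := by
    rw [← sq_eq_sq₀ (by positivity) (by positivity), ← norm_sq_add_sq_hopfModel,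
      ← norm_sq_add_sq_hopfModel, h]
  have hdiff : ‖p.1‖ ^ 2 - ‖p.2‖ ^ 2 = ‖q.1‖ ^ 2 - ‖q.2‖ ^ 2 := congrArg Prod.snd h
  have hnorm₁ : ‖p.1‖ = ‖q.1‖ := by
    rw [← sq_eq_sq₀ (norm_nonneg _) (norm_nonneg _)]; linarith
  have hnorm₂ : ‖p.2‖ = ‖q.2‖ := by
    rw [← sq_eq_sq₀ (norm_nonneg _) (norm_nonneg _)]; linarith
  have hcross : p.1 * conj p.2 = q.1 * conj q.2 := by
    have := congrArg Prod.fst h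
    simp only [hopfModel, mul_assoc] at this
    exact mul_left_cancel₀ two_ne_zero this
  by_cases hp₁ : p.1 = 0
  · by_cases hp₂ : p.2 = 0
    · have hq₁ : q.1 = 0 := norm_eq_zero.1 (by rw [← hnorm₁, hp₁, norm_zero])
      have hq₂ : q.2 = 0 := norm_eq_zero.1 (by rw [← hnorm₂, hp₂, norm_zero])
      exact ⟨1, by rw [one_smul]; exact Prod.ext (hp₁.trans hq₁.symm) (hp₂.trans hq₂.symm)⟩
    · obtain ⟨l, h₂, h₁⟩ := Circle.exists_mul_eq_and_mul_eq hp₂ hnorm₂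
        (by simpa only [map_mul, Complex.conj_conj, mul_comm] using congrArg conj hcross)
      exact ⟨l, Prod.ext h₁ h₂⟩
  · obtain ⟨l, h₁, h₂⟩ := Circle.exists_mul_eq_and_mul_eq hp₁ hnorm₁ hcross
    exact ⟨l, Prod.ext h₁ h₂⟩

theorem hopfModel_surjective : Function.Surjective hopfModel := by
  rintro ⟨c, t⟩
  set s := √(‖c‖ ^ 2 + t ^ 2)
  have hs : s ^ 2 = ‖c‖ ^ 2 + t ^ 2 := Real.sq_sqrt (by positivity)
  have hts : -s ≤ t := neg_le_of_abs_le (Real.abs_le_sqrt (by nlinarith [norm_nonneg c]))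
  rcases hts.eq_or_lt with hst | hst
  · have hc : c = 0 := by
      have ht : t ^ 2 = s ^ 2 := by rw [← hst, neg_sq]
      rw [← norm_eq_zero, ← sq_eq_zero_iff]
      linarith
    refine ⟨(0, (√(-t) : ℂ)), ?_⟩
    have ht : 0 ≤ -t := by linarith [Real.sqrt_nonneg (‖c‖ ^ 2 + t ^ 2)]
    simp [hopfModel, hc, Complex.norm_real, Real.sq_sqrt ht]
  · set x := √((s + t) / 2)
    have hx : 0 < x := Real.sqrt_pos.2 (by linarith)
    have hx2 : x ^ 2 = (s + t) / 2 := Real.sq_sqrt (by linarith)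
    refine ⟨((x : ℂ), conj c / (2 * x)), Prod.ext ?_ ?_⟩
    · have : (x : ℂ) ≠ 0 := by exact_mod_cast hx.ne'
      simp only [hopfModel, map_div₀, Complex.conj_conj, map_mul, Complex.conj_ofReal, map_ofNat]
      field_simp
    · simp only [hopfModel, norm_div, norm_mul, Complex.norm_conj, Complex.norm_real,
        Complex.norm_ofNat, Real.norm_eq_abs, abs_of_pos hx, div_pow, mul_pow, hx2]
      have : s + t ≠ 0 := by linarith
      field_simp
      nlinarith

/-- For `r > 0`, the restriction of `hopfModel` to the sphere of radius `r`
in `ℂ²` is an open map onto the sphere of radius `r²` in `ℂ × ℝ`. -/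
theorem hopfModel_sphere_open (r : ℝ) (hr : 0 < r)
    (H : {p : ℂ × ℂ // Real.sqrt (‖p.1‖ ^ 2 + ‖p.2‖ ^ 2) = r} →
         {q : ℂ × ℝ // Real.sqrt (‖q.1‖ ^ 2 + q.2 ^ 2) = r ^ 2})
    (hH : ∀ p, (H p : ℂ × ℝ) = hopfModel p) :
    IsOpenMap H ∧ Function.Surjective H := by
  have : CompactSpace {p : ℂ × ℂ // √(‖p.1‖ ^ 2 + ‖p.2‖ ^ 2) = r} :=
    isCompact_iff_compactSpace.mp (isCompact_setOf_sqrt_norm_sq_add_norm_sq_eq r)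
  have hcont : Continuous H := continuous_induced_rng.2 <| by
    simpa only [Function.comp_def, hH] using continuous_hopfModel.comp continuous_subtype_val
  have hsurj : Function.Surjective H := by
    intro q
    obtain ⟨p, hpq⟩ := hopfModel_surjective q
    have hp := (sqrt_norm_sq_add_sq_hopfModel_eq_sq_iff hr.le p).1 (hpq ▸ q.2)
    exact ⟨⟨p, hp⟩, Subtype.ext ((hH _).trans hpq)⟩
  refine ⟨(hcont.isClosedMap.isQuotientMap hcont hsurj).isOpenMap_of_transitive_on_fibers
    (fun (l : Circle) p ↦ ⟨l • p.1, by
      simpa only [Circle.smul_def, Prod.smul_fst, Prod.smul_snd, norm_smul, Circle.norm_coe,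
        one_mul] using p.2⟩)
    (fun l ↦ continuous_induced_rng.2 (continuous_subtype_val.const_smul l))
    (fun l p ↦ Subtype.ext (by rw [hH, hH]; exact hopfModel_circle_smul l p))
    (fun p q hpq ↦ ?_), hsurj⟩
  obtain ⟨l, hl⟩ := exists_circle_smul_eq_of_hopfModel_eq (p := p.1) (q := q.1)
    (by rw [← hH, ← hH, hpq])
  exact ⟨l, Subtype.ext hl⟩
end
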